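/- arXiv:2209.12431 — 2 statements merged into one kernel-verified Lean document; each statement's English description precedes it below -/
import Mathlib

section
/- Let r₀ = Σ cᵢⱼ xᵢ⊗xⱼ ∈ sl₂(ℂ)⊗sl₂(ℂ) (with x₁=e, x₂=f, x₃=h) be such that r₀ + τ(r₀) is sl₂(ℂ)-invariant (i.e. annihilated by ad a ⊗ 1 + 1 ⊗ ad a for all a). Then there exist α, β, γ, ζ ∈ ℂ with r₀ = α(h⊗e − e⊗h) + β(f⊗e − e⊗f) + γ(h⊗f − f⊗h) + ζ(h⊗h + 4 e⊗f). -/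
/-!
In the basis `(e, f, h)` a tensor of `L ⊗ L` is a `3 × 3` coefficient matrix `C`: the flip becomes
transposition and `ad a ⊗ 1 + 1 ⊗ ad a` becomes `C ↦ A C + C Aᵀ`, where `A` is the matrix of `ad a`.
Invariance of `S = C + Cᵀ` under `e` and `f` is a linear system whose solutions are the multiples of
the Casimir matrix. Hence `C` is determined by its antisymmetric part and its `h ⊗ h` entry, which
gives the four parameters.
-/

open TensorProduct

/-- An element `t` of `L ⊗ L` is `L`-invariant if `(ad a ⊗ 1 + 1 ⊗ ad a) t = 0` for all `a`. -/
def LieTensorInvariant (L : Type*) [LieRing L] [LieAlgebra ℂ L] (t : L ⊗[ℂ] L) : Prop :=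
  ∀ a : L,
    (LinearMap.rTensor L (LieAlgebra.ad ℂ L a) + LinearMap.lTensor L (LieAlgebra.ad ℂ L a)) t = 0

open Matrix LinearMap

namespace Module.Basis

variable {R M ι : Type*} [CommRing R] [AddCommGroup M] [Module R M] [Fintype ι]
  (b : Basis ι R M)

noncomputable def tensorCoeffs : M ⊗[R] M ≃ₗ[R] Matrix ι ι R :=
  (b.tensorProduct b).repr ≪≫ₗ Finsupp.linearEquivFunOnFinite R R (ι × ι) ≪≫ₗ
    LinearEquiv.curry R R ι ι ≪≫ₗ Matrix.ofLinearEquiv R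

@[simp]
lemma tensorCoeffs_tmul (m n : M) : b.tensorCoeffs (m ⊗ₜ n) = vecMulVec (b.repr m) (b.repr n) := by
  ext i j
  simp [tensorCoeffs, vecMulVec_apply, mul_comm]

lemma tensorCoeffs_comm (x : M ⊗[R] M) :
    b.tensorCoeffs (TensorProduct.comm R M M x) = (b.tensorCoeffs x)ᵀ := by
  induction x using TensorProduct.induction_on with
  | zero => simp
  | tmul m n => simp
  | add x y hx hy => simp [hx, hy]

variable [DecidableEq ι]

lemma tensorCoeffs_rTensor (φ : M →ₗ[R] M) (x : M ⊗[R] M) :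
    b.tensorCoeffs (φ.rTensor M x) = LinearMap.toMatrix b b φ * b.tensorCoeffs x := by
  induction x using TensorProduct.induction_on with
  | zero => simp
  | tmul m n => simp [mul_vecMulVec, LinearMap.toMatrix_mulVec_repr]
  | add x y hx hy => simp [hx, hy, mul_add]

lemma tensorCoeffs_lTensor (φ : M →ₗ[R] M) (x : M ⊗[R] M) :
    b.tensorCoeffs (φ.lTensor M x) = b.tensorCoeffs x * (LinearMap.toMatrix b b φ)ᵀ := by
  induction x using TensorProduct.induction_on with
  | zero => simp
  | tmul m n => simp [vecMulVec_mul, vecMul_transpose, LinearMap.toMatrix_mulVec_repr]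
  | add x y hx hy => simp [hx, hy, add_mul]

end Module.Basis

lemma LieTensorInvariant.toMatrix_ad_mul_add {L ι : Type*} [LieRing L] [LieAlgebra ℂ L]
    [Fintype ι] [DecidableEq ι] (b : Module.Basis ι ℂ L) {s : L ⊗[ℂ] L}
    (hs : LieTensorInvariant L s) (a : L) :
    toMatrix b b (LieAlgebra.ad ℂ L a) * b.tensorCoeffs s
      + b.tensorCoeffs s * (toMatrix b b (LieAlgebra.ad ℂ L a))ᵀ = 0 := by
  rw [← b.tensorCoeffs_rTensor, ← b.tensorCoeffs_lTensor, ← map_add, ← LinearMap.add_apply, hs a,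
    map_zero]

namespace IsSl2Triple

variable {L : Type*} [LieRing L] [LieAlgebra ℂ L]

lemma toMatrix_ad_e {b : Module.Basis (Fin 3) ℂ L} (t : IsSl2Triple (b 2) (b 0) (b 1)) :
    toMatrix b b (LieAlgebra.ad ℂ L (b 0)) = !![0, 0, -2; 0, 0, 0; 0, 1, 0] := by
  have hef := t.lie_e_f
  have heh : ⁅b 0, b 2⁆ = -((2 : ℂ) • b 0) := by rw [← lie_skew, t.lie_h_e_smul ℂ]
  ext i j
  fin_cases i <;> fin_cases j <;> simp [toMatrix_apply, hef, heh]

lemma toMatrix_ad_f {b : Module.Basis (Fin 3) ℂ L} (t : IsSl2Triple (b 2) (b 0) (b 1)) :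
    toMatrix b b (LieAlgebra.ad ℂ L (b 1)) = !![0, 0, 0; 0, 0, 2; -1, 0, 0] := by
  have hfe : ⁅b 1, b 0⁆ = -b 2 := by rw [← lie_skew, t.lie_e_f]
  have hfh : ⁅b 1, b 2⁆ = (2 : ℂ) • b 1 := by rw [← lie_skew, t.lie_lie_smul_f ℂ, neg_neg]
  ext i j
  fin_cases i <;> fin_cases j <;> simp [toMatrix_apply, hfe, hfh]

end IsSl2Triple

/-- The Casimir tensor `h ⊗ h + 2 e ⊗ f + 2 f ⊗ e` in the basis `(e, f, h)`. -/
def sl2CasimirCoeffs : Matrix (Fin 3) (Fin 3) ℂ := !![0, 2, 0; 2, 0, 0; 0, 0, 1]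

lemma eq_smul_sl2CasimirCoeffs {S : Matrix (Fin 3) (Fin 3) ℂ}
    (he : !![0, 0, -2; 0, 0, 0; 0, 1, 0] * S + S * !![0, 0, -2; 0, 0, 0; 0, 1, 0]ᵀ = 0)
    (hf : !![0, 0, 0; 0, 0, 2; -1, 0, 0] * S + S * !![0, 0, 0; 0, 0, 2; -1, 0, 0]ᵀ = 0) :
    S = S 2 2 • sl2CasimirCoeffs := by
  rw [← Matrix.ext_iff] at he hf
  simp only [Fin.forall_fin_succ, Matrix.add_apply, mul_apply, Fin.sum_univ_three, transpose_apply,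
    Matrix.zero_apply, Fin.isValue, of_apply, cons_val', cons_val_zero, cons_val_one, cons_val,
    cons_val_fin_one, cons_val_succ, Fin.succ_zero_eq_one, Fin.succ_one_eq_two, IsEmpty.forall_iff,
    zero_mul, mul_zero, one_mul, mul_one, neg_mul, mul_neg, zero_add, add_zero, neg_eq_zero,
    mul_eq_zero, OfNat.ofNat_ne_zero, false_or, or_false, true_and, and_true] at he hf
  obtain ⟨⟨-, h21, h01⟩, ⟨h12, h11⟩, h10, -⟩ := he
  obtain ⟨⟨h02, h00⟩, ⟨h20, -⟩, -⟩ := hf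
  ext i j
  fin_cases i <;> fin_cases j <;>
    simp only [sl2CasimirCoeffs, Matrix.smul_apply, smul_eq_mul, mul_zero, mul_one, Fin.isValue,
      Fin.zero_eta, Fin.mk_one, Fin.reduceFinMk, of_apply, cons_val', cons_val_zero, cons_val_one,
      cons_val, cons_val_fin_one]
  · exact h00
  · linear_combination h01
  · exact h02
  · linear_combination h10
  · exact h11
  · exact h12
  · exact h20
  · exact h21

lemma eq_of_add_transpose_eq_smul_sl2CasimirCoeffs {C : Matrix (Fin 3) (Fin 3) ℂ} {κ : ℂ}
    (h : C + Cᵀ = κ • sl2CasimirCoeffs) :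
    C = !![0, 4 * C 2 2 - C 1 0, -C 2 0; C 1 0, 0, -C 2 1; C 2 0, C 2 1, C 2 2] := by
  rw [← Matrix.ext_iff] at h
  simp only [Fin.forall_fin_succ, Matrix.add_apply, transpose_apply, sl2CasimirCoeffs,
    Matrix.smul_apply, smul_eq_mul, Fin.isValue, of_apply, cons_val', cons_val_zero, cons_val_succ,
    cons_val_fin_one, Fin.succ_zero_eq_one, Fin.succ_one_eq_two, IsEmpty.forall_iff, and_true,
    mul_zero, mul_one, add_self_eq_zero] at h
  obtain ⟨⟨h00, h01, h02⟩, ⟨-, h11, h12⟩, -, -, h22⟩ := h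
  ext i j
  fin_cases i <;> fin_cases j <;>
    simp only [Fin.isValue, Fin.zero_eta, Fin.mk_one, Fin.reduceFinMk, of_apply, cons_val',
      cons_val_zero, cons_val_one, cons_val, cons_val_fin_one]
  · exact h00
  · linear_combination h01 - 2 * h22
  · linear_combination h02
  · exact h11
  · linear_combination h12

theorem stmt_1 (L : Type*) [LieRing L] [LieAlgebra ℂ L]
    (e f h : L) (t : IsSl2Triple h e f)
    (b : Module.Basis (Fin 3) ℂ L) (hb : ⇑b = ![e, f, h])
    (r₀ : L ⊗[ℂ] L)
    (hinv : LieTensorInvariant L (r₀ + TensorProduct.comm ℂ L L r₀)) :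
    ∃ α β γ ζ : ℂ,
      r₀ = α • (h ⊗ₜ[ℂ] e - e ⊗ₜ[ℂ] h) + β • (f ⊗ₜ[ℂ] e - e ⊗ₜ[ℂ] f)
        + γ • (h ⊗ₜ[ℂ] f - f ⊗ₜ[ℂ] h) + ζ • (h ⊗ₜ[ℂ] h + (4 : ℂ) • (e ⊗ₜ[ℂ] f)) := by
  obtain ⟨rfl, rfl, rfl⟩ : b 0 = e ∧ b 1 = f ∧ b 2 = h := by simp [hb]
  have he := hinv.toMatrix_ad_mul_add b (b 0)
  have hf := hinv.toMatrix_ad_mul_add b (b 1)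
  rw [t.toMatrix_ad_e, map_add, b.tensorCoeffs_comm] at he
  rw [t.toMatrix_ad_f, map_add, b.tensorCoeffs_comm] at hf
  have hC := eq_of_add_transpose_eq_smul_sl2CasimirCoeffs (eq_smul_sl2CasimirCoeffs he hf)
  set C := b.tensorCoeffs r₀
  refine ⟨C 2 0, C 1 0, C 2 1, C 2 2, b.tensorCoeffs.injective (hC.trans ?_)⟩
  ext i j
  fin_cases i <;> fin_cases j <;> simp [vecMulVec_apply, sub_eq_neg_add, mul_comm]
end

section
/- Every automorphism of sl₂(ℂ) has matrix, in the basis (e, f, h), of the form [[a², −b², −2ab], [−c², d², 2cd], [−ac, bd, ad+bc]] for some a, b, c, d ∈ ℂ with ad − bc = 1. -/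
/-!
In the matrix model `e = E₁₂`, `f = E₂₁`, `h = diag(1, -1)`, the matrix of the statement is
conjugation by `g = [[a, b], [c, d]]`.

Converse: for `det g = 1` the conjugates of `(h, e, f)` form again an `sl₂` triple. Any `sl₂`
triple is linearly independent (eigenvectors of `ad h` for `2, -2, 0`), so the linear map sending
the basis `(e, f, h)` to it is bijective, and it preserves brackets because it does so on the basis.

Forward: `φ e` is an eigenvector of `ad (φ h)` with nonzero eigenvalue, hence isotropic for the
Killing form, i.e. `r² + pq = 0` in coordinates `p e + q f + r h`; over an algebraically closed
field this means `φ e = a² e - c² f - ac h`. Likewise `φ f` for some `(b, d)`. Then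
`φ h = ⁅φ e, φ f⁆ = (ad - bc) • H` with `H` the expected image of `h`, and `⁅φ h, φ e⁆ = 2 φ e`
forces `(ad - bc)² = 1`; the sign is fixed by replacing `(b, d)` with `(-b, -d)`.
-/

section CommRing

variable {R L : Type*} [CommRing R] [LieRing L] [LieAlgebra R L]

theorem LinearMap.map_lie_of_basis {ι L' : Type*} [LieRing L'] [LieAlgebra R L']
    (ψ : L →ₗ[R] L') (b : Module.Basis ι R L)
    (hψ : ∀ i j, ψ ⁅b i, b j⁆ = ⁅ψ (b i), ψ (b j)⁆) (x y : L) :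
    ψ ⁅x, y⁆ = ⁅ψ x, ψ y⁆ := by
  have key : (LieModule.toEnd R L L : L →ₗ[R] Module.End R L).compr₂ ψ =
      (LieModule.toEnd R L' L' : L' →ₗ[R] Module.End R L').compl₁₂ ψ ψ :=
    LinearMap.ext_basis b b hψ
  exact LinearMap.congr_fun₂ key x y

namespace IsSl2Triple

variable {h e f : L}

lemma lie_f_e (t : IsSl2Triple h e f) : ⁅f, e⁆ = -h := by
  rw [← lie_skew, t.lie_e_f]

lemma lie_e_h_nsmul (t : IsSl2Triple h e f) : ⁅e, h⁆ = -(2 • e) := by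
  rw [← lie_skew, t.lie_h_e_nsmul]

lemma lie_f_h_nsmul (t : IsSl2Triple h e f) : ⁅f, h⁆ = 2 • f := by
  rw [← lie_skew, t.lie_h_f_nsmul, neg_neg]

lemma lie_smul_add_smul_add_smul (t : IsSl2Triple h e f) (p q r p' q' r' : R) :
    ⁅p • e + q • f + r • h, p' • e + q' • f + r' • h⁆ =
      (2 * (r * p' - p * r')) • e + (2 * (q * r' - r * q')) • f + (p * q' - q * p') • h := by
  simp only [add_lie, lie_add, smul_lie, lie_smul, lie_self, t.lie_e_f, t.lie_h_e_nsmul,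
    t.lie_h_f_nsmul, t.lie_f_e, t.lie_e_h_nsmul, t.lie_f_h_nsmul]
  module

end IsSl2Triple

/- In the matrix model `e = E₁₂`, `f = E₂₁`, `h = diag(1, -1)` these are `g x (adj g)` for
`x = e, f, h` and `g = [[a, b], [c, d]]`. -/

def sl2ConjE (e f h : L) (a c : R) : L := a ^ 2 • e - c ^ 2 • f - (a * c) • h

def sl2ConjF (e f h : L) (b d : R) : L := (-b ^ 2) • e + d ^ 2 • f + (b * d) • h

def sl2ConjH (e f h : L) (a b c d : R) : L :=
  (-(2 * a * b)) • e + (2 * c * d) • f + (a * d + b * c) • h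

lemma sl2ConjF_eq_neg_sl2ConjE (e f h : L) (b d : R) :
    sl2ConjF e f h b d = -sl2ConjE e f h b d := by
  unfold sl2ConjF sl2ConjE
  module

lemma sl2ConjF_neg_neg (e f h : L) (b d : R) :
    sl2ConjF e f h (-b) (-d) = sl2ConjF e f h b d := by
  simp only [sl2ConjF, neg_sq, neg_mul_neg]

lemma sl2ConjH_neg_neg (e f h : L) (a b c d : R) :
    sl2ConjH e f h a (-b) c (-d) = -sl2ConjH e f h a b c d := by
  unfold sl2ConjH
  module

namespace IsSl2Triple

variable {h e f : L}

lemma lie_sl2ConjE_sl2ConjF (t : IsSl2Triple h e f) (a b c d : R) :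
    ⁅sl2ConjE e f h a c, sl2ConjF e f h b d⁆ = (a * d - b * c) • sl2ConjH e f h a b c d := by
  simp only [sl2ConjE, sl2ConjF, sl2ConjH, lie_add, sub_lie, smul_lie, lie_smul, lie_self,
    t.lie_e_f, t.lie_h_e_nsmul, t.lie_h_f_nsmul, t.lie_f_e, t.lie_e_h_nsmul, t.lie_f_h_nsmul]
  module

lemma lie_sl2ConjH_sl2ConjE (t : IsSl2Triple h e f) (a b c d : R) :
    ⁅sl2ConjH e f h a b c d, sl2ConjE e f h a c⁆ =
      (2 * (a * d - b * c)) • sl2ConjE e f h a c := by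
  simp only [sl2ConjE, sl2ConjH, add_lie, lie_sub, smul_lie, lie_smul, lie_self,
    t.lie_e_f, t.lie_h_e_nsmul, t.lie_h_f_nsmul, t.lie_f_e, t.lie_e_h_nsmul, t.lie_f_h_nsmul]
  module

lemma lie_sl2ConjH_sl2ConjF (t : IsSl2Triple h e f) (a b c d : R) :
    ⁅sl2ConjH e f h a b c d, sl2ConjF e f h b d⁆ =
      -((2 * (a * d - b * c)) • sl2ConjF e f h b d) := by
  simp only [sl2ConjF, sl2ConjH, add_lie, lie_add, smul_lie, lie_smul, lie_self,
    t.lie_e_f, t.lie_h_e_nsmul, t.lie_h_f_nsmul, t.lie_f_e, t.lie_e_h_nsmul, t.lie_f_h_nsmul]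
  module

lemma isSl2Triple_sl2Conj (t : IsSl2Triple h e f) {a b c d : R} (hD : a * d - b * c = 1)
    (hH : sl2ConjH e f h a b c d ≠ 0) :
    IsSl2Triple (sl2ConjH e f h a b c d) (sl2ConjE e f h a c) (sl2ConjF e f h b d) where
  h_ne_zero := hH
  lie_e_f := by rw [t.lie_sl2ConjE_sl2ConjF, hD, one_smul]
  lie_h_e_nsmul := by rw [t.lie_sl2ConjH_sl2ConjE, hD, mul_one, ofNat_smul_eq_nsmul]
  lie_h_f_nsmul := by rw [t.lie_sl2ConjH_sl2ConjF, hD, mul_one, ofNat_smul_eq_nsmul]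

end IsSl2Triple

end CommRing

lemma LinearIndependent.eq_of_smul_add_smul_add_smul_eq {R M : Type*} [Ring R]
    [AddCommGroup M] [Module R M] {u v w : M} (hli : LinearIndependent R ![u, v, w])
    {p q r p' q' r' : R} (h : p • u + q • v + r • w = p' • u + q' • v + r' • w) :
    p = p' ∧ q = q' ∧ r = r' := by
  have key := Fintype.linearIndependent_iff.mp hli ![p - p', q - q', r - r'] (by
    simp only [Fin.sum_univ_three, Matrix.cons_val, sub_smul]
    rw [← sub_eq_zero.mpr h]
    abel)
  exact ⟨sub_eq_zero.mp (key 0), sub_eq_zero.mp (key 1), sub_eq_zero.mp (key 2)⟩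

lemma exists_sq_eq_of_sq_add_mul_eq_zero {K : Type*} [Field K] [IsAlgClosed K] {p q r : K}
    (hpqr : r ^ 2 + p * q = 0) : ∃ a c, p = a ^ 2 ∧ q = -c ^ 2 ∧ r = -(a * c) := by
  obtain ⟨a, rfl⟩ := IsAlgClosed.exists_pow_nat_eq p two_pos
  obtain ⟨c, hc⟩ := IsAlgClosed.exists_pow_nat_eq (-q) two_pos
  have hsq : (a * c) ^ 2 = r ^ 2 := by linear_combination a ^ 2 * hc - hpqr
  rcases (Commute.all _ _).sq_eq_sq_iff_eq_or_eq_neg.mp hsq with hac | hac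
  · exact ⟨a, -c, rfl, by linear_combination hc, by linear_combination -hac⟩
  · exact ⟨a, c, rfl, by linear_combination hc, by linear_combination hac⟩

namespace IsSl2Triple

variable {K L : Type*} [Field K] [LieRing L] [LieAlgebra K L] {h e f : L}

variable (K) in
lemma linearIndependent [NeZero (2 : K)] (t : IsSl2Triple h e f) :
    LinearIndependent K ![e, f, h] := by
  refine (LieModule.toEnd K L L h).eigenvectors_linearIndependent' ![2, -2, 0] ?_ _ ?_
  · have h2 : (0 : K) ≠ 2 := two_ne_zero.symm
    have h4 : (2 : K) ≠ -2 := fun h ↦ h2 (mul_self_eq_zero.mp (by linear_combination h)).symm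
    intro i j hij
    fin_cases i <;> fin_cases j <;> simp_all
  · intro i
    fin_cases i <;> simp [Module.End.hasEigenvector_iff, t.lie_h_e_smul K, t.lie_lie_smul_f K,
      t.e_ne_zero, t.f_ne_zero, t.h_ne_zero]

lemma sl2ConjH_ne_zero [NeZero (2 : K)] (t : IsSl2Triple h e f) {a b c d : K}
    (hD : a * d - b * c = 1) : sl2ConjH e f h a b c d ≠ 0 := by
  intro hH
  obtain ⟨h2ab, -, hadbc⟩ := (t.linearIndependent K).eq_of_smul_add_smul_add_smul_eq
    (p' := 0) (q' := 0) (r' := 0) (by simpa only [sl2ConjH, zero_smul, add_zero] using hH)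
  have hab : a * b = 0 :=
    (mul_eq_zero.mp (by linear_combination -h2ab : (2 : K) * (a * b) = 0)).resolve_left two_ne_zero
  rcases mul_eq_zero.mp hab with rfl | rfl
  · exact one_ne_zero (by linear_combination -hD - hadbc : (1 : K) = 0)
  · exact one_ne_zero (by linear_combination -hD + hadbc : (1 : K) = 0)

lemma exists_sl2ConjE_of_lie_eq_smul [IsAlgClosed K] [NeZero (2 : K)] (t : IsSl2Triple h e f)
    (bas : Module.Basis (Fin 3) K L) (hbas : ⇑bas = ![e, f, h]) {x z : L} {μ : K} (hμ : μ ≠ 0)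
    (hzx : ⁅z, x⁆ = μ • x) : ∃ a c : K, x = sl2ConjE e f h a c := by
  have hcoords (v : L) : ∃ p q r : K, v = p • e + q • f + r • h :=
    ⟨_, _, _, by simpa [Fin.sum_univ_three, hbas] using (bas.sum_repr v).symm⟩
  obtain ⟨p, q, r, rfl⟩ := hcoords x
  obtain ⟨p', q', r', rfl⟩ := hcoords z
  rw [t.lie_smul_add_smul_add_smul, smul_add, smul_add, smul_smul, smul_smul, smul_smul] at hzx
  obtain ⟨h1, h2, h3⟩ := (t.linearIndependent K).eq_of_smul_add_smul_add_smul_eq hzx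
  -- `r ^ 2 + p * q` is proportional to the Killing form `κ(x, x)`, and by invariance
  -- `2 μ κ(x, x) = κ(⁅z, x⁆, x) + κ(x, ⁅z, x⁆) = 0`.
  have hQ : r ^ 2 + p * q = 0 := by
    refine (mul_eq_zero.mp ?_).resolve_left (mul_ne_zero two_ne_zero hμ)
    linear_combination (-q) * h1 - p * h2 - 2 * r * h3
  obtain ⟨a, c, rfl, rfl, rfl⟩ := exists_sq_eq_of_sq_add_mul_eq_zero hQ
  exact ⟨a, c, by rw [sl2ConjE]; module⟩

theorem exists_sl2Conj_of_lieHom [IsAlgClosed K] [NeZero (2 : K)] (t : IsSl2Triple h e f)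
    (bas : Module.Basis (Fin 3) K L) (hbas : ⇑bas = ![e, f, h]) (φ : L →ₗ⁅K⁆ L) (hφ : φ e ≠ 0) :
    ∃ a b c d : K, a * d - b * c = 1 ∧ φ e = sl2ConjE e f h a c ∧ φ f = sl2ConjF e f h b d ∧
      φ h = sl2ConjH e f h a b c d := by
  obtain ⟨a, c, hx⟩ := t.exists_sl2ConjE_of_lie_eq_smul bas hbas (z := φ h) two_ne_zero
    (by rw [← φ.map_lie, t.lie_h_e_smul K, map_smul])
  obtain ⟨b, d, hy⟩ := t.exists_sl2ConjE_of_lie_eq_smul bas hbas (z := φ h) (x := -φ f)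
    (neg_ne_zero.mpr two_ne_zero)
    (by rw [lie_neg, ← φ.map_lie, t.lie_lie_smul_f K, map_neg, map_smul]; module)
  rw [neg_eq_iff_eq_neg, ← sl2ConjF_eq_neg_sl2ConjE] at hy
  have hz : φ h = (a * d - b * c) • sl2ConjH e f h a b c d := by
    rw [← t.lie_sl2ConjE_sl2ConjF, ← hx, ← hy, ← φ.map_lie, t.lie_e_f]
  have hD : (a * d - b * c) ^ 2 = 1 := by
    have h2 : (2 : K) • φ e = (2 * (a * d - b * c) ^ 2) • φ e := by
      rw [← map_smul, ← t.lie_h_e_smul K, φ.map_lie, hz, smul_lie, hx, t.lie_sl2ConjH_sl2ConjE,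
        smul_smul]
      ring_nf
    exact mul_left_cancel₀ two_ne_zero (by linear_combination -smul_left_injective K hφ h2)
  rcases sq_eq_one_iff.mp hD with hD | hD
  · exact ⟨a, b, c, d, hD, hx, hy, by rw [hz, hD, one_smul]⟩
  · refine ⟨a, -b, c, -d, by linear_combination -hD, hx, by rw [hy, sl2ConjF_neg_neg], ?_⟩
    rw [hz, hD, sl2ConjH_neg_neg, neg_one_smul]

theorem exists_lieEquiv_eq_of_isSl2Triple [NeZero (2 : K)] (t : IsSl2Triple h e f)
    (bas : Module.Basis (Fin 3) K L) (hbas : ⇑bas = ![e, f, h]) {h' e' f' : L}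
    (t' : IsSl2Triple h' e' f') : ∃ φ : L ≃ₗ⁅K⁆ L, φ e = e' ∧ φ f = f' ∧ φ h = h' := by
  have : FiniteDimensional K L := Module.Finite.of_basis bas
  set ψ := bas.constr K ![e', f', h']
  have hψ (i : Fin 3) : ψ (![e, f, h] i) = ![e', f', h'] i := hbas ▸ bas.constr_basis K _ i
  obtain ⟨he, hf, hh⟩ : ψ e = e' ∧ ψ f = f' ∧ ψ h = h' := ⟨hψ 0, hψ 1, hψ 2⟩
  have map_lie := ψ.map_lie_of_basis bas <| by
    rw [hbas]
    intro i j
    fin_cases i <;> fin_cases j <;> simp [he, hf, hh, t.lie_e_f, t.lie_f_e, t.lie_h_e_nsmul,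
      t.lie_h_f_nsmul, t.lie_e_h_nsmul, t.lie_f_h_nsmul, t'.lie_e_f, t'.lie_f_e,
      t'.lie_h_e_nsmul, t'.lie_h_f_nsmul, t'.lie_e_h_nsmul, t'.lie_f_h_nsmul]
  have hinj : Function.Injective ψ :=
    bas.injective_constr_of_linearIndependent (t'.linearIndependent K)
  exact ⟨.ofBijective { ψ with map_lie' := map_lie _ _ }
    ⟨hinj, LinearMap.injective_iff_surjective.mp hinj⟩, he, hf, hh⟩

end IsSl2Triple

/-- Every automorphism of `sl₂(ℂ)` has, in the basis `(e, f, h)`, the matrix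
`[[a², −b², −2ab], [−c², d², 2cd], [−ac, bd, ad+bc]]` for some `a, b, c, d` with
`ad − bc = 1` (the columns are the coordinates of the images of `e, f, h`),
and conversely every such matrix defines an automorphism. -/
theorem stmt_12 (L : Type*) [LieRing L] [LieAlgebra ℂ L]
    (e f h : L) (t : IsSl2Triple h e f)
    (bas : Module.Basis (Fin 3) ℂ L) (hbas : ⇑bas = ![e, f, h]) :
    (∀ φ : L ≃ₗ⁅ℂ⁆ L, ∃ a b c d : ℂ, a * d - b * c = 1 ∧
      φ e = a ^ 2 • e - c ^ 2 • f - (a * c) • h ∧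
      φ f = (-b ^ 2) • e + d ^ 2 • f + (b * d) • h ∧
      φ h = (-(2 * a * b)) • e + (2 * c * d) • f + (a * d + b * c) • h) ∧
    (∀ a b c d : ℂ, a * d - b * c = 1 → ∃ φ : L ≃ₗ⁅ℂ⁆ L,
      φ e = a ^ 2 • e - c ^ 2 • f - (a * c) • h ∧
      φ f = (-b ^ 2) • e + d ^ 2 • f + (b * d) • h ∧
      φ h = (-(2 * a * b)) • e + (2 * c * d) • f + (a * d + b * c) • h) :=
  ⟨fun φ ↦ t.exists_sl2Conj_of_lieHom bas hbas φ.toLieHom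
      (φ.injective.ne t.e_ne_zero |>.trans_eq φ.map_zero),
    fun _ _ _ _ hD ↦ t.exists_lieEquiv_eq_of_isSl2Triple bas hbas
      (t.isSl2Triple_sl2Conj hD (t.sl2ConjH_ne_zero hD))⟩
end
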